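/- For the 4-qubit error-detecting code with stabilizers XXXX, ZIIZ, IZZI, for every qubit position i ∈ {1,2,3,4} there exist a logical X operator and a logical Z operator (elements of N(S)\S implementing the logical X and Z respectively on the codespace) that act as the identity on qubit i. -/

import Mathlib

open Matrix Complex

noncomputable section

/-- Single-qubit Pauli matrices. -/
def σI : Matrix (Fin 2) (Fin 2) ℂ := 1
def σX : Matrix (Fin 2) (Fin 2) ℂ := !![0, 1; 1, 0]
def σY : Matrix (Fin 2) (Fin 2) ℂ := !![0, -Complex.I; Complex.I, 0]
def σZ : Matrix (Fin 2) (Fin 2) ℂ := !![1, 0; 0, -1]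

/-- Tensor product of single-qubit matrices, one per qubit. -/
def tensorQ {ι : Type*} [Fintype ι] (W : ι → Matrix (Fin 2) (Fin 2) ℂ) :
    Matrix (ι → Fin 2) (ι → Fin 2) ℂ :=
  Matrix.of fun x y => ∏ i, W i (x i) (y i)

def IsPauliFactor (M : Matrix (Fin 2) (Fin 2) ℂ) : Prop :=
  M = σI ∨ M = σX ∨ M = σY ∨ M = σZ

def IsPhase (c : ℂ) : Prop := c = 1 ∨ c = -1 ∨ c = Complex.I ∨ c = -Complex.I

/-- Membership in the `n`-qubit Pauli group: a phase ±1, ±i times a tensor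
product of single-qubit Pauli matrices. -/
def InPauliGroup {ι : Type*} [Fintype ι] (A : Matrix (ι → Fin 2) (ι → Fin 2) ℂ) : Prop :=
  ∃ (c : ℂ) (W : ι → Matrix (Fin 2) (Fin 2) ℂ),
    IsPhase c ∧ (∀ i, IsPauliFactor (W i)) ∧ A = c • tensorQ W


/-- Computational basis vector `|x⟩`. -/
def ket {n : ℕ} (x : Fin n → Fin 2) : (Fin n → Fin 2) → ℂ :=
  fun y => if y = x then 1 else 0

/-- Encoding of `|0⟩` in the 4-qubit code: `(|0000⟩+|1111⟩)/√2`. -/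
def enc₀ : (Fin 4 → Fin 2) → ℂ :=
  ((Real.sqrt 2 : ℝ) : ℂ)⁻¹ • (ket ![0, 0, 0, 0] + ket ![1, 1, 1, 1])

/-- Encoding of `|1⟩` in the 4-qubit code: `(|1001⟩+|0110⟩)/√2`. -/
def enc₁ : (Fin 4 → Fin 2) → ℂ :=
  ((Real.sqrt 2 : ℝ) : ℂ)⁻¹ • (ket ![1, 0, 0, 1] + ket ![0, 1, 1, 0])

/-- The three stabilizer generators `XXXX, ZIIZ, IZZI`. -/
def gens4 : Fin 3 → Matrix (Fin 4 → Fin 2) (Fin 4 → Fin 2) ℂ :=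
  ![tensorQ ![σX, σX, σX, σX], tensorQ ![σZ, σI, σI, σZ], tensorQ ![σI, σZ, σZ, σI]]

/-- The stabilizer group `S` of the 4-qubit code: all products of the
generators `XXXX, ZIIZ, IZZI`. -/
def S4 : Set (Matrix (Fin 4 → Fin 2) (Fin 4 → Fin 2) ℂ) :=
  {A | ∃ L : List (Fin 3), A = (L.map gens4).prod}

/-!
All operators involved are X-strings `X^s = ⊗ X^{s_i}` or Z-strings `Z^s = ⊗ Z^{s_i}`. On basis
states `X^s |y⟩ = |y + s⟩` and `Z^s |y⟩ = (-1)^{|s ∧ y|} |y⟩`, and `X^s`, `Z^t` commute iff their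
supports overlap in an even number of qubits, so commutation with `XXXX, ZIIZ, IZZI` and the
action on the codewords `(|c⟩ + |d⟩)/√2` reduce to parity checks. Every element of `S` fixes both
codewords, while a logical `X` moves `|0_L⟩` to `|1_L⟩` and a logical `Z` negates `|1_L⟩`.
-/

section TensorQ

variable {ι : Type*} [Fintype ι]

theorem tensorQ_mul [DecidableEq ι] (W V : ι → Matrix (Fin 2) (Fin 2) ℂ) :
    tensorQ W * tensorQ V = tensorQ fun i => W i * V i := by
  ext x y
  simp only [tensorQ, Matrix.mul_apply, Matrix.of_apply, Finset.prod_univ_sum]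
  simp [Finset.prod_mul_distrib]

theorem tensorQ_smul (c : ι → ℂ) (W : ι → Matrix (Fin 2) (Fin 2) ℂ) :
    tensorQ (fun i => c i • W i) = (∏ i, c i) • tensorQ W := by
  ext x y
  simp [tensorQ, Finset.prod_mul_distrib]

theorem tensorQ_commute_of_mul_eq_smul [DecidableEq ι] {W V : ι → Matrix (Fin 2) (Fin 2) ℂ}
    (c : ι → ℂ) (hc : ∏ i, c i = 1) (h : ∀ i, W i * V i = c i • (V i * W i)) :
    Commute (tensorQ W) (tensorQ V) := by
  rw [Commute, SemiconjBy, tensorQ_mul, tensorQ_mul, funext h, tensorQ_smul, hc, one_smul]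

theorem tensorQ_commute [DecidableEq ι] {W V : ι → Matrix (Fin 2) (Fin 2) ℂ}
    (h : ∀ i, Commute (W i) (V i)) : Commute (tensorQ W) (tensorQ V) :=
  tensorQ_commute_of_mul_eq_smul 1 (by simp) fun i => by simp [(h i).eq]

theorem tensorQ_mulVec_ket {n : ℕ} {W : Fin n → Matrix (Fin 2) (Fin 2) ℂ}
    (f : Fin n → Fin 2 → Fin 2) (c : Fin n → Fin 2 → ℂ)
    (hW : ∀ i a b, W i a b = if a = f i b then c i b else 0) (y : Fin n → Fin 2) :
    tensorQ W *ᵥ ket y = (∏ i, c i (y i)) • ket fun i => f i (y i) := by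
  ext x
  simp only [Matrix.mulVec, dotProduct, ket, mul_ite, mul_one, mul_zero, Finset.sum_ite_eq',
    Finset.mem_univ, if_true]
  simp [tensorQ, hW, Finset.prod_ite_zero, ket, funext_iff]

end TensorQ

theorem σX_mul_σZ : σX * σZ = -(σZ * σX) := by
  ext a b; fin_cases a <;> fin_cases b <;> simp [σX, σZ, Matrix.mul_apply]

def pauliXPow (x : Fin 2) : Matrix (Fin 2) (Fin 2) ℂ := if x = 1 then σX else σI

def pauliZPow (z : Fin 2) : Matrix (Fin 2) (Fin 2) ℂ := if z = 1 then σZ else σI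

theorem pauliXPow_apply (x a b : Fin 2) : pauliXPow x a b = if a = b + x then 1 else 0 := by
  fin_cases x <;> fin_cases a <;> fin_cases b <;> simp [pauliXPow, σX, σI]

theorem pauliZPow_apply (z a b : Fin 2) :
    pauliZPow z a b = if a = b then (-1) ^ (z * b).val else 0 := by
  fin_cases z <;> fin_cases a <;> fin_cases b <;> simp [pauliZPow, σZ, σI]

theorem pauliXPow_mul_pauliZPow (x z : Fin 2) :
    pauliXPow x * pauliZPow z = (-1 : ℂ) ^ (x * z).val • (pauliZPow z * pauliXPow x) := by
  fin_cases x <;> fin_cases z <;> simp [pauliXPow, pauliZPow, σI, σX_mul_σZ]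

theorem commute_pauliXPow (x x' : Fin 2) : Commute (pauliXPow x) (pauliXPow x') := by
  unfold pauliXPow; split_ifs <;> simp [σI]

theorem commute_pauliZPow (z z' : Fin 2) : Commute (pauliZPow z) (pauliZPow z') := by
  unfold pauliZPow; split_ifs <;> simp [σI]

section Strings

variable {ι : Type*}

def xString (s : ι → Fin 2) : ι → Matrix (Fin 2) (Fin 2) ℂ := fun i => pauliXPow (s i)

def zString (s : ι → Fin 2) : ι → Matrix (Fin 2) (Fin 2) ℂ := fun i => pauliZPow (s i)

def overlap [Fintype ι] (s t : ι → Fin 2) : ℕ := ∑ i, (s i * t i).val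

theorem isPauliFactor_xString (s : ι → Fin 2) (i : ι) : IsPauliFactor (xString s i) := by
  unfold xString pauliXPow IsPauliFactor; split_ifs <;> simp

theorem isPauliFactor_zString (s : ι → Fin 2) (i : ι) : IsPauliFactor (zString s i) := by
  unfold zString pauliZPow IsPauliFactor; split_ifs <;> simp

theorem xString_apply_of_eq_zero {s : ι → Fin 2} {i : ι} (h : s i = 0) : xString s i = σI := by
  simp [xString, pauliXPow, h]

theorem zString_apply_of_eq_zero {s : ι → Fin 2} {i : ι} (h : s i = 0) : zString s i = σI := by
  simp [zString, pauliZPow, h]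

variable [Fintype ι] [DecidableEq ι]

theorem commute_xString_xString (s t : ι → Fin 2) :
    Commute (tensorQ (xString s)) (tensorQ (xString t)) :=
  tensorQ_commute fun i => commute_pauliXPow (s i) (t i)

theorem commute_zString_zString (s t : ι → Fin 2) :
    Commute (tensorQ (zString s)) (tensorQ (zString t)) :=
  tensorQ_commute fun i => commute_pauliZPow (s i) (t i)

theorem commute_xString_zString {s t : ι → Fin 2} (h : Even (overlap s t)) :
    Commute (tensorQ (xString s)) (tensorQ (zString t)) := by
  refine tensorQ_commute_of_mul_eq_smul (fun i => (-1) ^ (s i * t i).val) ?_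
    fun i => pauliXPow_mul_pauliZPow (s i) (t i)
  rw [Finset.prod_pow_eq_pow_sum, ← overlap, h.neg_one_pow]

end Strings

section Kets

variable {n : ℕ}

theorem xString_mulVec_ket (s y : Fin n → Fin 2) :
    tensorQ (xString s) *ᵥ ket y = ket (y + s) := by
  rw [tensorQ_mulVec_ket (W := xString s) (fun i b => b + s i) 1
    (fun i a b => pauliXPow_apply (s i) a b) y]
  simp [Pi.add_def]

theorem zString_mulVec_ket (s y : Fin n → Fin 2) :
    tensorQ (zString s) *ᵥ ket y = (-1 : ℂ) ^ overlap s y • ket y := by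
  rw [tensorQ_mulVec_ket (W := zString s) (fun _ b => b) (fun i b => (-1) ^ (s i * b).val)
    (fun i a b => pauliZPow_apply (s i) a b) y, Finset.prod_pow_eq_pow_sum]
  rfl

def pairState (c d : Fin n → Fin 2) : (Fin n → Fin 2) → ℂ :=
  ((Real.sqrt 2 : ℝ) : ℂ)⁻¹ • (ket c + ket d)

theorem pairState_comm (c d : Fin n → Fin 2) : pairState c d = pairState d c := by
  rw [pairState, pairState, add_comm]

theorem xString_mulVec_pairState {s c d c' d' : Fin n → Fin 2} (hc : c + s = c')
    (hd : d + s = d') : tensorQ (xString s) *ᵥ pairState c d = pairState c' d' := by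
  rw [pairState, pairState, mulVec_smul, mulVec_add, xString_mulVec_ket, xString_mulVec_ket, hc, hd]

theorem zString_mulVec_pairState_of_even {s c d : Fin n → Fin 2} (hc : Even (overlap s c))
    (hd : Even (overlap s d)) : tensorQ (zString s) *ᵥ pairState c d = pairState c d := by
  rw [pairState, mulVec_smul, mulVec_add, zString_mulVec_ket, zString_mulVec_ket, hc.neg_one_pow,
    hd.neg_one_pow, one_smul, one_smul]

theorem zString_mulVec_pairState_of_odd {s c d : Fin n → Fin 2} (hc : Odd (overlap s c))
    (hd : Odd (overlap s d)) : tensorQ (zString s) *ᵥ pairState c d = -pairState c d := by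
  rw [pairState, mulVec_smul, mulVec_add, zString_mulVec_ket, zString_mulVec_ket, hc.neg_one_pow,
    hd.neg_one_pow, neg_one_smul, neg_one_smul, ← neg_add, smul_neg]

end Kets

theorem gens4_zero : gens4 0 = tensorQ (xString ![1, 1, 1, 1]) := rfl

theorem gens4_one : gens4 1 = tensorQ (zString ![1, 0, 0, 1]) := rfl

theorem gens4_two : gens4 2 = tensorQ (zString ![0, 1, 1, 0]) := rfl

theorem enc₀_eq_pairState : enc₀ = pairState ![0, 0, 0, 0] ![1, 1, 1, 1] := rfl

theorem enc₁_eq_pairState : enc₁ = pairState ![1, 0, 0, 1] ![0, 1, 1, 0] := rfl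

theorem gens4_mulVec_enc₀ (j : Fin 3) : gens4 j *ᵥ enc₀ = enc₀ := by
  rw [enc₀_eq_pairState]
  match j with
  | 0 => rw [gens4_zero, xString_mulVec_pairState (c' := ![1, 1, 1, 1]) (d' := ![0, 0, 0, 0])
      (by decide) (by decide), pairState_comm]
  | 1 => rw [gens4_one, zString_mulVec_pairState_of_even (by decide) (by decide)]
  | 2 => rw [gens4_two, zString_mulVec_pairState_of_even (by decide) (by decide)]

theorem gens4_mulVec_enc₁ (j : Fin 3) : gens4 j *ᵥ enc₁ = enc₁ := by
  rw [enc₁_eq_pairState]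
  match j with
  | 0 => rw [gens4_zero, xString_mulVec_pairState (c' := ![0, 1, 1, 0]) (d' := ![1, 0, 0, 1])
      (by decide) (by decide), pairState_comm]
  | 1 => rw [gens4_one, zString_mulVec_pairState_of_even (by decide) (by decide)]
  | 2 => rw [gens4_two, zString_mulVec_pairState_of_even (by decide) (by decide)]

theorem List.prod_mulVec_eq_self {n R : Type*} [Fintype n] [DecidableEq n] [CommSemiring R]
    {L : List (Matrix n n R)} {v : n → R} (h : ∀ A ∈ L, A *ᵥ v = v) : L.prod *ᵥ v = v := by
  induction L with
  | nil => exact one_mulVec v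
  | cons A L ih =>
    rw [List.prod_cons, ← mulVec_mulVec, ih fun B hB => h B (List.mem_cons_of_mem A hB),
      h A List.mem_cons_self]

theorem mulVec_eq_self_of_mem_S4 {A : Matrix (Fin 4 → Fin 2) (Fin 4 → Fin 2) ℂ} (hA : A ∈ S4)
    {v : (Fin 4 → Fin 2) → ℂ} (hv : ∀ j, gens4 j *ᵥ v = v) : A *ᵥ v = v := by
  obtain ⟨L, rfl⟩ := hA
  exact List.prod_mulVec_eq_self (by simpa using fun j _ => hv j)

theorem enc₁_ne_enc₀ : enc₁ ≠ enc₀ := by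
  intro h
  have := congrFun h ![0, 0, 0, 0]
  norm_num [enc₀, enc₁, ket, eq_comm (a := (0 : ℂ))] at this

theorem neg_enc₁_ne_enc₁ : -enc₁ ≠ enc₁ := by
  intro h
  have := congrFun h ![1, 0, 0, 1]
  norm_num [enc₁, ket, neg_eq_self] at this

def IsLogicalX (W : Fin 4 → Matrix (Fin 2) (Fin 2) ℂ) : Prop :=
  (∀ j, IsPauliFactor (W j)) ∧ (∀ j, Commute (tensorQ W) (gens4 j)) ∧ tensorQ W ∉ S4 ∧
    tensorQ W *ᵥ enc₀ = enc₁ ∧ tensorQ W *ᵥ enc₁ = enc₀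

def IsLogicalZ (W : Fin 4 → Matrix (Fin 2) (Fin 2) ℂ) : Prop :=
  (∀ j, IsPauliFactor (W j)) ∧ (∀ j, Commute (tensorQ W) (gens4 j)) ∧ tensorQ W ∉ S4 ∧
    tensorQ W *ᵥ enc₀ = enc₀ ∧ tensorQ W *ᵥ enc₁ = -enc₁

theorem isLogicalX_xString {s : Fin 4 → Fin 2} (hZIIZ : Even (overlap s ![1, 0, 0, 1]))
    (hIZZI : Even (overlap s ![0, 1, 1, 0])) (h₀ : tensorQ (xString s) *ᵥ enc₀ = enc₁)
    (h₁ : tensorQ (xString s) *ᵥ enc₁ = enc₀) : IsLogicalX (xString s) := by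
  refine ⟨isPauliFactor_xString s, fun j => ?_, fun hS => ?_, h₀, h₁⟩
  · match j with
    | 0 => rw [gens4_zero]; exact commute_xString_xString _ _
    | 1 => rw [gens4_one]; exact commute_xString_zString hZIIZ
    | 2 => rw [gens4_two]; exact commute_xString_zString hIZZI
  · exact enc₁_ne_enc₀ (h₀ ▸ mulVec_eq_self_of_mem_S4 hS gens4_mulVec_enc₀)

theorem isLogicalZ_zString {s : Fin 4 → Fin 2} (hXXXX : Even (overlap ![1, 1, 1, 1] s))
    (h₀ : tensorQ (zString s) *ᵥ enc₀ = enc₀) (h₁ : tensorQ (zString s) *ᵥ enc₁ = -enc₁) :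
    IsLogicalZ (zString s) := by
  refine ⟨isPauliFactor_zString s, fun j => ?_, fun hS => ?_, h₀, h₁⟩
  · match j with
    | 0 => rw [gens4_zero]; exact (commute_xString_zString hXXXX).symm
    | 1 => rw [gens4_one]; exact commute_zString_zString _ _
    | 2 => rw [gens4_two]; exact commute_zString_zString _ _
  · exact neg_enc₁_ne_enc₁ (h₁ ▸ mulVec_eq_self_of_mem_S4 hS gens4_mulVec_enc₁)

theorem isLogicalX_XIIX : IsLogicalX (xString ![1, 0, 0, 1]) :=
  isLogicalX_xString (by decide) (by decide)
    (xString_mulVec_pairState (by decide) (by decide))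
    (xString_mulVec_pairState (by decide) (by decide))

theorem isLogicalX_IXXI : IsLogicalX (xString ![0, 1, 1, 0]) :=
  isLogicalX_xString (by decide) (by decide)
    ((xString_mulVec_pairState (by decide) (by decide)).trans (pairState_comm _ _))
    ((xString_mulVec_pairState (by decide) (by decide)).trans (pairState_comm _ _))

theorem isLogicalZ_ZZII : IsLogicalZ (zString ![1, 1, 0, 0]) :=
  isLogicalZ_zString (by decide)
    (zString_mulVec_pairState_of_even (by decide) (by decide))
    (zString_mulVec_pairState_of_odd (by decide) (by decide))

theorem isLogicalZ_IIZZ : IsLogicalZ (zString ![0, 0, 1, 1]) :=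
  isLogicalZ_zString (by decide)
    (zString_mulVec_pairState_of_even (by decide) (by decide))
    (zString_mulVec_pairState_of_odd (by decide) (by decide))

/-- for every qubit position `i` of the 4-qubit code there are a
logical `X` operator and a logical `Z` operator — Pauli tensor products lying in
`N(S) \ S` which implement the logical `X` (resp. `Z`) on the codespace — whose
`i`-th tensor factor is the identity. -/
theorem fourQubitCode_logical_ops_trivial_on_each_qubit :
    ∀ i : Fin 4,
      (∃ W : Fin 4 → Matrix (Fin 2) (Fin 2) ℂ,
        (∀ j, IsPauliFactor (W j)) ∧ W i = σI ∧
        (∀ j : Fin 3, tensorQ W * gens4 j = gens4 j * tensorQ W) ∧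
        tensorQ W ∉ S4 ∧
        (tensorQ W).mulVec enc₀ = enc₁ ∧ (tensorQ W).mulVec enc₁ = enc₀) ∧
      (∃ W : Fin 4 → Matrix (Fin 2) (Fin 2) ℂ,
        (∀ j, IsPauliFactor (W j)) ∧ W i = σI ∧
        (∀ j : Fin 3, tensorQ W * gens4 j = gens4 j * tensorQ W) ∧
        tensorQ W ∉ S4 ∧
        (tensorQ W).mulVec enc₀ = enc₀ ∧ (tensorQ W).mulVec enc₁ = -enc₁) := by
  intro i
  obtain ⟨x, ⟨hxP, hxC, hxS, hx₀, hx₁⟩, hxi⟩ : ∃ x, IsLogicalX (xString x) ∧ x i = 0 := by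
    match i with
    | 0 | 3 => exact ⟨_, isLogicalX_IXXI, rfl⟩
    | 1 | 2 => exact ⟨_, isLogicalX_XIIX, rfl⟩
  obtain ⟨z, ⟨hzP, hzC, hzS, hz₀, hz₁⟩, hzi⟩ : ∃ z, IsLogicalZ (zString z) ∧ z i = 0 := by
    match i with
    | 0 | 1 => exact ⟨_, isLogicalZ_IIZZ, rfl⟩
    | 2 | 3 => exact ⟨_, isLogicalZ_ZZII, rfl⟩
  exact ⟨⟨xString x, hxP, xString_apply_of_eq_zero hxi, fun j => (hxC j).eq, hxS, hx₀, hx₁⟩,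
    ⟨zString z, hzP, zString_apply_of_eq_zero hzi, fun j => (hzC j).eq, hzS, hz₀, hz₁⟩⟩
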